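/- (Count of vertical 6-cycles at a given level.) Let n ≥ 3 and 0 ≤ i ≤ n−3. Let K_i be the subgroup of Equiv.Perm (Fin n) generated by {s_i, s_{i+1}}. The predicate 'σ⁻¹(n−1) ∈ {i, i+1, i+2}' is invariant under right multiplication of σ by elements of K_i, hence descends to the set of left cosets σK_i. The number of left cosets of K_i in Equiv.Perm (Fin n) whose representatives σ satisfy σ⁻¹(n−1) ∈ {i, i+1, i+2} equals (n−1)!/2. (These cosets are precisely the vertical primitive 6-cycles with transpositions s_i, s_{i+1}.) -/

import Mathlib

/-!
Since adjacent transpositions generate `S₃`, the subgroup `K = ⟨s_i, s_{i+1}⟩` is the copy of `S₃`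
permuting the positions `i, i+1, i+2` and fixing all others. Hence `|K| = 6`, and right
multiplication by `K` moves `σ⁻¹(n-1)` only within that block, so the vertical permutations form a
union of left cosets of `K`. There are `3 · (n-1)!` vertical permutations, `(n-1)!` for each of the
three admissible values of `σ⁻¹(n-1)`, hence `3 · (n-1)! / 6 = (n-1)!/2` vertical cosets.
-/

/-- The adjacent transposition `s_j = (j, j+1)` in the symmetric group on `Fin n`,
indexed by `j : Fin (n-1)`. -/
def s {n : ℕ} (j : Fin (n - 1)) : Equiv.Perm (Fin n) :=
  Equiv.swap ⟨j.val, by have := j.isLt; omega⟩ ⟨j.val + 1, by have := j.isLt; omega⟩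

open Equiv Equiv.Perm Finset Nat

namespace Equiv.Perm

variable {α β : Type*}

theorem viaEmbedding_swap [DecidableEq α] [DecidableEq β] (ι : α ↪ β) (x y : α) :
    (swap x y).viaEmbedding ι = swap (ι x) (ι y) := by
  ext z
  by_cases hz : z ∈ Set.range ι
  · obtain ⟨w, rfl⟩ := hz
    rw [viaEmbedding_apply, ι.injective.swap_apply]
  · rw [viaEmbedding_apply_of_notMem _ _ _ hz,
      swap_apply_of_ne_of_ne (fun h => hz ⟨x, h.symm⟩) (fun h => hz ⟨y, h.symm⟩)]

theorem apply_mem_range_iff_of_mem_range_viaEmbeddingHom {ι : α ↪ β} {τ : Perm β}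
    (hτ : τ ∈ (viaEmbeddingHom ι).range) (x : β) : τ x ∈ Set.range ι ↔ x ∈ Set.range ι := by
  obtain ⟨π, rfl⟩ := hτ
  rw [viaEmbeddingHom_apply]
  by_cases hx : x ∈ Set.range ι
  · obtain ⟨y, rfl⟩ := hx
    simp [viaEmbedding_apply]
  · rw [viaEmbedding_apply_of_notMem _ _ _ hx]

theorem card_subtype_apply_eq [Finite α] (a b : α) :
    Nat.card {σ : Perm α // σ a = b} = (Nat.card α - 1)! := by
  classical
  have fix_a : {σ : Perm α // σ a = b} ≃ {σ : Perm α // ∀ x, ¬x ≠ a → σ x = x} :=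
    (Equiv.mulLeft (swap a b)).subtypeEquiv fun σ => by simp [swap_apply_eq_iff]
  have := Fintype.ofFinite α
  rw [Nat.card_congr (fix_a.trans (Perm.subtypeEquivSubtypePerm (· ≠ a)).symm), Nat.card_perm,
    Nat.card_eq_fintype_card, Nat.card_eq_fintype_card, Fintype.card_subtype_compl,
    Fintype.card_subtype_eq]

theorem card_subtype_apply_mem [Finite α] (a : α) (t : Finset α) :
    Nat.card {σ : Perm α // σ a ∈ t} = #t * (Nat.card α - 1)! := by
  rw [← Nat.card_congr (sigmaSubtypeFiberEquivSubtype (fun σ : Perm α => σ a) (q := (· ∈ t))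
    fun _ => Iff.rfl), Nat.card_sigma]
  simp [card_subtype_apply_eq]

end Equiv.Perm

theorem Subgroup.card_subtype_eq_card_mul_card_cosets {G : Type*} [Group G] (K : Subgroup G)
    {P : G → Prop} (hP : ∀ σ τ, τ ∈ K → (P (σ * τ) ↔ P σ)) :
    Nat.card {σ // P σ} =
      Nat.card K * Nat.card {x : G ⧸ K // ∃ σ, QuotientGroup.mk σ = x ∧ P σ} := by
  let T : Set (G ⧸ K) := {x | ∃ σ, QuotientGroup.mk σ = x ∧ P σ}
  have hpre : QuotientGroup.mk ⁻¹' T = {σ | P σ} := by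
    ext σ
    refine ⟨fun ⟨σ', hσ', h⟩ => ?_, fun h => ⟨σ, rfl, h⟩⟩
    simpa using (hP σ' (σ'⁻¹ * σ) (QuotientGroup.eq.mp hσ')).mpr h
  calc Nat.card {σ // P σ} = Nat.card (K × T) :=
        Nat.card_congr ((Equiv.setCongr hpre).symm.trans
          (QuotientGroup.preimageMkEquivSubgroupProdSet K T))
    _ = _ := Nat.card_prod _ _

def blockEmbedding {k n : ℕ} (i : ℕ) (h : i + k ≤ n) : Fin k ↪ Fin n :=
  (Fin.natAddEmb i).trans (Fin.castLEEmb h)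

@[simp]
theorem val_blockEmbedding {k n i : ℕ} (h : i + k ≤ n) (j : Fin k) :
    (blockEmbedding i h j).val = i + j := rfl

theorem mem_range_blockEmbedding {k n i : ℕ} (h : i + k ≤ n) (x : Fin n) :
    x ∈ Set.range (blockEmbedding i h) ↔ i ≤ x.val ∧ x.val < i + k := by
  constructor
  · rintro ⟨j, rfl⟩
    simp
  · rintro ⟨hix, hxk⟩
    exact ⟨⟨x - i, by omega⟩, Fin.ext (by simp only [val_blockEmbedding]; omega)⟩

theorem closure_range_s_eq_range_viaEmbeddingHom {k n i : ℕ} (h : i + (k + 1) ≤ n) :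
    Subgroup.closure (Set.range fun j : Fin k => s (n := n) ⟨i + j, by omega⟩) =
      (viaEmbeddingHom (blockEmbedding i h)).range := by
  have hs : (fun j : Fin k => s (n := n) ⟨i + j, by omega⟩) =
      viaEmbeddingHom (blockEmbedding i h) ∘ fun j => swap j.castSucc j.succ := by
    ext j : 1
    rw [Function.comp_apply, viaEmbeddingHom_apply, viaEmbedding_swap, s]
    rfl
  rw [hs, Set.range_comp, ← MonoidHom.map_closure,
    Subgroup.closure_eq_top_of_mclosure_eq_top (mclosure_swap_castSucc_succ k),
    MonoidHom.range_eq_map]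

/-- count of vertical 6-cycles at a given level: let `K_i = ⟨s_i, s_{i+1}⟩`.
The verticality predicate `σ⁻¹(n-1) ∈ {i, i+1, i+2}` is invariant under right
multiplication by elements of `K_i`, and the number of left cosets of `K_i` whose
representatives satisfy it equals `(n-1)!/2`. -/
theorem card_vertical_six_cycles (n : ℕ) (i : ℕ) (hi : i + 3 ≤ n) :
    let K : Subgroup (Equiv.Perm (Fin n)) :=
      Subgroup.closure {s ⟨i, by omega⟩, s ⟨i + 1, by omega⟩}
    let P : Equiv.Perm (Fin n) → Prop := fun σ =>
      (σ⁻¹ ⟨n - 1, by omega⟩ : Fin n).val ∈ ({i, i + 1, i + 2} : Set ℕ)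
    (∀ σ τ : Equiv.Perm (Fin n), τ ∈ K → (P (σ * τ) ↔ P σ)) ∧
    Nat.card {x : Equiv.Perm (Fin n) ⧸ K // ∃ σ, QuotientGroup.mk σ = x ∧ P σ} =
      (n - 1).factorial / 2 := by
  intro K P
  have hK : K = (viaEmbeddingHom (blockEmbedding i hi)).range := by
    rw [← closure_range_s_eq_range_viaEmbeddingHom hi]
    show Subgroup.closure _ = _
    congr 1
    ext
    simp [Fin.exists_fin_two, eq_comm]
  have hP : ∀ σ, P σ ↔ σ⁻¹ ⟨n - 1, by omega⟩ ∈ Set.range (blockEmbedding i hi) := fun σ => by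
    simp only [P, mem_range_blockEmbedding, Set.mem_insert_iff, Set.mem_singleton_iff]
    omega
  have hinv : ∀ σ τ : Perm (Fin n), τ ∈ K → (P (σ * τ) ↔ P σ) := fun σ τ hτ => by
    rw [hP, hP, mul_inv_rev, mul_apply]
    exact apply_mem_range_iff_of_mem_range_viaEmbeddingHom (hK ▸ K.inv_mem hτ) _
  refine ⟨hinv, ?_⟩
  have hcardK : Nat.card K = 6 := by
    rw [hK, ← Nat.card_congr (MonoidHom.ofInjective (viaEmbeddingHom_injective _)).toEquiv]
    simp [Fintype.card_perm, Nat.factorial]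
  have hcardP : Nat.card {σ // P σ} = 3 * (n - 1)! := by
    have hcount :=
      card_subtype_apply_mem (⟨n - 1, by omega⟩ : Fin n) (univ.map (blockEmbedding i hi))
    rw [card_map, Finset.card_univ, Fintype.card_fin, Nat.card_fin] at hcount
    rw [← hcount]
    exact Nat.card_congr ((Equiv.inv _).subtypeEquiv fun σ => by simp [hP])
  have h2 : 2 ∣ (n - 1)! := Nat.dvd_factorial two_pos (by omega)
  have hcosets := K.card_subtype_eq_card_mul_card_cosets hinv
  rw [hcardK, hcardP] at hcosets
  omega
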